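/- arXiv:math/9801089 — 3 statements merged into one kernel-verified Lean document; each statement's English description precedes it below -/
import Mathlib

section
/- For every integer n ≥ 1, all nonzero real numbers x and y, and every permutation w ∈ S_n, ∑_{(u,v) ∈ S_n × S_n, u∘v = w} [C(x + n − 1 − d(u), n)/x^n] · [C(y + n − 1 − d(v), n)/y^n] = C(xy + n − 1 − d(w), n)/(xy)^n. -/
/-- The generalized binomial coefficient `C(t, n) = t(t-1)⋯(t-n+1)/n!`. -/
noncomputable def genBinom (t : ℝ) (n : ℕ) : ℝ :=
  (∏ i ∈ Finset.range n, (t - i)) / Nat.factorial n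

/-- The number of descents of a permutation `w` of `{0, 1, …, n-1}`:
the number of indices `i` with `i + 1 < n` and `w (i+1) < w i`. -/
noncomputable def numDescents {n : ℕ} (w : Equiv.Perm (Fin n)) : ℕ :=
  Nat.card {i : ℕ // ∃ h : i + 1 < n, w ⟨i + 1, h⟩ < w ⟨i, Nat.lt_of_succ_lt h⟩}

/-!
For natural numbers `a`, `b` the identity (multiplied by `(ab)ⁿ`) is a count. Call
`f : Fin n → Fin a` compatible with `w` when `f` is weakly increasing and strictly increasing at
the descents of `w`. Adding to `f i` the number of ascents of `w` before `i` turns these `f` into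
the strictly increasing maps into `Fin (a + n - 1 - d(w))`, so there are `C(a + n - 1 - d(w), n)`
of them. A triple `(u, f, g)` with `f` compatible with `u` and `g` compatible with `u⁻¹ * w`
becomes the labelling `i ↦ (g i, f ((u⁻¹ * w) i))` with values in `Fin b ×ₗ Fin a`, which is
compatible with `w`; conversely `u⁻¹ * w` is recovered by sorting the positions lexicographically
by `(f ((u⁻¹ * w) i), w i)`. Both sides of the resulting identity are polynomials in `x` and in
`y` that agree on pairs of natural numbers, so they agree everywhere.
-/

open Finset

lemma Nat.count_le_count_add_sub {p : ℕ → Prop} [DecidablePred p] {k m : ℕ} (h : k ≤ m) :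
    Nat.count p m ≤ Nat.count p k + (m - k) := by
  rw [← Nat.add_sub_of_le h, Nat.count_add, Nat.add_sub_cancel_left]
  exact Nat.add_le_add_left (Nat.count_le _) _

lemma Fin.strictMono_iff_adjacent {n : ℕ} {γ : Type*} [Preorder γ] {g : Fin n → γ} :
    StrictMono g ↔ ∀ i (h : i + 1 < n), g ⟨i, Nat.lt_of_succ_lt h⟩ < g ⟨i + 1, h⟩ := by
  cases n with
  | zero => exact ⟨fun _ i h => by omega, fun _ i => i.elim0⟩
  | succ m =>
    rw [Fin.strictMono_iff_lt_succ]
    exact ⟨fun hg i h => hg ⟨i, by omega⟩, fun hg i => hg i (by omega)⟩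

lemma StrictMono.val_add_sub_le {n N : ℕ} {F : Fin n → Fin N} (hF : StrictMono F) {i j : Fin n}
    (hij : i ≤ j) : (F i : ℕ) + (j - i) ≤ F j := by
  have := card_le_card_of_injOn F (s := Icc i j) (t := Icc (F i) (F j))
    (fun k hk => by
      simp only [coe_Icc, Set.mem_Icc] at hk ⊢
      exact ⟨hF.monotone hk.1, hF.monotone hk.2⟩)
    hF.injective.injOn
  simp only [Fin.card_Icc] at this
  have : (F i : ℕ) ≤ F j := hF.monotone hij
  omega

lemma StrictMono.val_le_val_apply {n N : ℕ} {F : Fin n → Fin N} (hF : StrictMono F)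
    (i : Fin n) : (i : ℕ) ≤ F i := by
  have := hF.val_add_sub_le (i := ⟨0, i.pos⟩) (j := i) (Fin.le_def.2 (Nat.zero_le _))
  simp only [Nat.sub_zero] at this
  omega

def strictMonoEquivFinset (α : Type*) [LinearOrder α] (k : ℕ) :
    {f : Fin k → α // StrictMono f} ≃ {s : Finset α // s.card = k} where
  toFun f := ⟨univ.map ⟨f.1, f.2.injective⟩, by simp⟩
  invFun s := ⟨s.1.orderEmbOfFin s.2, (s.1.orderEmbOfFin s.2).strictMono⟩
  left_inv f := Subtype.ext <| congrArg DFunLike.coe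
    (orderEmbOfFin_unique' (f := OrderEmbedding.ofStrictMono f.1 f.2) _ (by simp)).symm
  right_inv s := Subtype.ext (map_orderEmbOfFin_univ s.1 s.2)

lemma card_strictMono_fin (α : Type*) [LinearOrder α] [Fintype α] (k : ℕ) :
    Nat.card {f : Fin k → α // StrictMono f} = (Fintype.card α).choose k := by
  rw [Nat.card_congr (strictMonoEquivFinset α k), Nat.card_eq_fintype_card,
    Fintype.card_finset_len]

lemma lt_iff_lt_of_strictMono_comp {n : ℕ} {γ : Type*} [Preorder γ] {k : Fin n → γ}
    {σ : Equiv.Perm (Fin n)} (h : StrictMono (k ∘ σ)) (i j : Fin n) :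
    σ⁻¹ i < σ⁻¹ j ↔ k i < k j := by
  rw [← h.lt_iff_lt]
  simp

lemma Tuple.eq_sort_of_strictMono_comp {n : ℕ} {γ : Type*} [LinearOrder γ] {k : Fin n → γ}
    {σ : Equiv.Perm (Fin n)} (h : StrictMono (k ∘ σ)) : σ = Tuple.sort k :=
  Tuple.eq_sort_iff.2 ⟨h.monotone, fun _ _ hij hk => absurd hk (h hij).ne⟩

lemma Tuple.strictMono_comp_sort {n : ℕ} {γ : Type*} [LinearOrder γ] {k : Fin n → γ}
    (hk : Function.Injective k) : StrictMono (k ∘ Tuple.sort k) :=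
  (Tuple.monotone_sort k).strictMono_of_injective (hk.comp (Tuple.sort k).injective)

lemma sum_filter_mul_eq {G M : Type*} [Group G] [Fintype G] [DecidableEq G] [AddCommMonoid M]
    (w : G) (F : G × G → M) :
    ∑ p ∈ univ.filter (fun p : G × G => p.1 * p.2 = w), F p = ∑ u, F (u, u⁻¹ * w) := by
  rw [sum_filter, Fintype.sum_prod_type]
  refine sum_congr rfl fun u _ => ?_
  simp [← eq_inv_mul_iff_mul_eq]

section PolynomialIdentity

open Polynomial

variable {R : Type*} [CommRing R] [IsDomain R] [CharZero R]

lemma eq_of_forall_natCast_eq {f g : R → R} (hf : ∃ p : R[X], ∀ x, f x = p.eval x)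
    (hg : ∃ q : R[X], ∀ x, g x = q.eval x) (h : ∀ k : ℕ, f k = g k) (x : R) :
    f x = g x := by
  obtain ⟨p, hp⟩ := hf
  obtain ⟨q, hq⟩ := hg
  have hpq : p = q := eq_of_infinite_eval_eq p q <|
    (Set.infinite_range_of_injective Nat.cast_injective).mono <| by
      rintro _ ⟨k, rfl⟩
      simpa [← hp, ← hq] using h k
  rw [hp, hq, hpq]

lemma eq_of_forall_natCast_eq₂ {F G : R → R → R}
    (hF₁ : ∀ y, ∃ p : R[X], ∀ x, F x y = p.eval x)
    (hG₁ : ∀ y, ∃ p : R[X], ∀ x, G x y = p.eval x)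
    (hF₂ : ∀ x, ∃ p : R[X], ∀ y, F x y = p.eval y)
    (hG₂ : ∀ x, ∃ p : R[X], ∀ y, G x y = p.eval y)
    (h : ∀ a b : ℕ, F a b = G a b) (x y : R) : F x y = G x y := by
  have hb (b : ℕ) (x : R) : F x b = G x b :=
    eq_of_forall_natCast_eq (hF₁ b) (hG₁ b) (h · b) x
  exact eq_of_forall_natCast_eq (hF₂ x) (hG₂ x) (hb · x) y

end PolynomialIdentity

lemma genBinom_eq_eval_descPochhammer (t : ℝ) (k : ℕ) :
    genBinom t k = (descPochhammer ℝ k).eval t / k.factorial := by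
  rw [genBinom, descPochhammer_eval_eq_prod_range]

lemma genBinom_natCast (m k : ℕ) : genBinom m k = m.choose k := by
  rw [genBinom_eq_eval_descPochhammer, Nat.cast_choose_eq_descPochhammer_div]

namespace RiffleShuffle

variable {n : ℕ}

def IsDescent (w : Equiv.Perm (Fin n)) (i : ℕ) : Prop :=
  ∃ h : i + 1 < n, w ⟨i + 1, h⟩ < w ⟨i, Nat.lt_of_succ_lt h⟩

instance (w : Equiv.Perm (Fin n)) : DecidablePred (IsDescent w) :=
  fun _ => inferInstanceAs (Decidable (∃ _ : _, _))

def numAscents (w : Equiv.Perm (Fin n)) : ℕ := Nat.count (¬IsDescent w ·) (n - 1)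

lemma numDescents_eq_count (w : Equiv.Perm (Fin n)) :
    numDescents w = Nat.count (IsDescent w) (n - 1) := by
  rw [Nat.count_eq_card_filter_range, ← Nat.card_eq_finsetCard]
  exact Nat.card_congr <| Equiv.subtypeEquivRight fun i => by
    change IsDescent w i ↔ _
    rw [mem_filter, mem_range, iff_and_self]
    rintro ⟨_, _⟩
    omega

lemma numDescents_add_numAscents (w : Equiv.Perm (Fin n)) :
    numDescents w + numAscents w = n - 1 := by
  rw [numDescents_eq_count, numAscents, Nat.count_eq_card_filter_range,
    Nat.count_eq_card_filter_range, card_filter_add_card_filter_not, card_range]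

lemma genBinom_natCast_add_sub (hn : 1 ≤ n) (m : ℕ) (w : Equiv.Perm (Fin n)) :
    genBinom (m + n - 1 - numDescents w) n = (m + numAscents w).choose n := by
  have h : ((numDescents w + numAscents w : ℕ) : ℝ) = n - 1 := by
    rw [numDescents_add_numAscents, Nat.cast_sub hn, Nat.cast_one]
  rw [← genBinom_natCast, Nat.cast_add]
  push_cast at h
  congr 1
  linarith

section Compatible

variable {α β : Type*} [LinearOrder α] [LinearOrder β]

-- `f` is monotone and `w` is increasing on each fibre of `f`.
def Compatible (w : Equiv.Perm (Fin n)) (f : Fin n → α) : Prop :=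
  StrictMono fun i => toLex (f i, w i)

lemma compatible_iff_val_add_le {a : ℕ} {w : Equiv.Perm (Fin n)} {f : Fin n → Fin a} :
    Compatible w f ↔ ∀ i (h : i + 1 < n), (f ⟨i, Nat.lt_of_succ_lt h⟩ : ℕ) +
      (if IsDescent w i then 1 else 0) ≤ f ⟨i + 1, h⟩ := by
  rw [Compatible, Fin.strictMono_iff_adjacent]
  refine forall₂_congr fun i h => ?_
  rw [Prod.Lex.toLex_lt_toLex]
  by_cases hd : IsDescent w i
  · have := hd.choose_spec.asymm
    simp only [hd, this, if_true, and_false, or_false, Fin.lt_def]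
    omega
  · have : w ⟨i, Nat.lt_of_succ_lt h⟩ < w ⟨i + 1, h⟩ :=
      lt_of_le_of_ne (not_lt.1 fun h' => hd ⟨h, h'⟩) (w.injective.ne (by simp))
    simp only [hd, this, if_false, and_true, Fin.lt_def, Fin.ext_iff]
    omega

lemma compatible_iff_strictMono_add_count {a : ℕ} {w : Equiv.Perm (Fin n)}
    {f : Fin n → Fin a} :
    Compatible w f ↔ StrictMono fun i => (f i : ℕ) + Nat.count (¬IsDescent w ·) i := by
  rw [compatible_iff_val_add_le, Fin.strictMono_iff_adjacent]
  refine forall₂_congr fun i h => ?_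
  have := Nat.count_succ (¬IsDescent w ·) i
  by_cases hd : IsDescent w i <;>
    simp only [hd, if_true, if_false, not_true_eq_false, not_false_eq_true] at this ⊢ <;> omega

lemma count_le_val_apply {N : ℕ} {F : Fin n → Fin N} (hF : StrictMono F)
    (w : Equiv.Perm (Fin n)) (i : Fin n) : Nat.count (¬IsDescent w ·) i ≤ F i :=
  (Nat.count_le _).trans (hF.val_le_val_apply i)

lemma val_sub_count_lt {a : ℕ} {w : Equiv.Perm (Fin n)} {F : Fin n → Fin (a + numAscents w)}
    (hF : StrictMono F) (i : Fin n) : (F i : ℕ) - Nat.count (¬IsDescent w ·) i < a := by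
  have hi := i.2
  have h₁ : (F i : ℕ) + (n - 1 - i) ≤ F ⟨n - 1, by omega⟩ :=
    hF.val_add_sub_le (j := ⟨n - 1, by omega⟩) (Fin.le_def.2 (Nat.le_sub_one_of_lt hi))
  have h₂ : (F ⟨n - 1, by omega⟩ : ℕ) < a + numAscents w := Fin.is_lt _
  have h₃ : numAscents w ≤ Nat.count (¬IsDescent w ·) i + (n - 1 - i) :=
    Nat.count_le_count_add_sub (Nat.le_sub_one_of_lt hi)
  have h₄ := count_le_val_apply hF w i
  omega

def compatibleEquivStrictMono (a : ℕ) (w : Equiv.Perm (Fin n)) :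
    {f : Fin n → Fin a // Compatible w f} ≃
      {F : Fin n → Fin (a + numAscents w) // StrictMono F} where
  toFun f := ⟨fun i => ⟨f.1 i + Nat.count (¬IsDescent w ·) i, by
      have := Nat.count_monotone (¬IsDescent w ·) (Nat.le_sub_one_of_lt i.2)
      have := (f.1 i).2
      rw [numAscents]
      omega⟩, compatible_iff_strictMono_add_count.1 f.2⟩
  invFun F := ⟨fun i => ⟨F.1 i - Nat.count (¬IsDescent w ·) i, val_sub_count_lt F.2 i⟩, by
    rw [compatible_iff_strictMono_add_count]
    have hF : StrictMono fun i => (F.1 i : ℕ) := F.2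
    convert hF using 2 with i
    have := count_le_val_apply F.2 w i
    simp only
    omega⟩
  left_inv f := by ext i; simp
  right_inv F := by
    ext i
    have := count_le_val_apply F.2 w i
    simp only
    omega

lemma compatible_orderIso_comp_iff (e : α ≃o β) {w : Equiv.Perm (Fin n)} {f : Fin n → α} :
    Compatible w (e ∘ f) ↔ Compatible w f := by
  simp only [Compatible, StrictMono, Prod.Lex.toLex_lt_toLex, Function.comp_apply,
    e.lt_iff_lt, e.injective.eq_iff]

lemma card_compatible [Fintype α] (w : Equiv.Perm (Fin n)) :
    Nat.card {f : Fin n → α // Compatible w f} = (Fintype.card α + numAscents w).choose n := by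
  let e := (Fintype.orderIsoFinOfCardEq α rfl).symm
  calc Nat.card {f : Fin n → α // Compatible w f}
      = Nat.card {f : Fin n → Fin (Fintype.card α) // Compatible w f} :=
        Nat.card_congr <| ((Equiv.refl _).arrowCongr e.toEquiv).subtypeEquiv fun _ =>
          (compatible_orderIso_comp_iff e).symm
    _ = Nat.card {F : Fin n → Fin (Fintype.card α + numAscents w) // StrictMono F} :=
        Nat.card_congr (compatibleEquivStrictMono _ w)
    _ = _ := by rw [card_strictMono_fin, Fintype.card_fin]

lemma compatible_toLex_iff {v w : Equiv.Perm (Fin n)} {g : Fin n → β} {F : Fin n → α}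
    (h : ∀ i j, v i < v j ↔ toLex (F i, w i) < toLex (F j, w j)) :
    Compatible w (fun i => toLex (g i, F i)) ↔ Compatible v g := by
  simp only [Compatible, StrictMono, Prod.Lex.toLex_lt_toLex, h, toLex_inj, Prod.mk.injEq]
  grind

lemma Compatible.toLex_comp {u w : Equiv.Perm (Fin n)} {f : Fin n → α} {g : Fin n → β}
    (hf : Compatible u f) (hg : Compatible (u⁻¹ * w) g) :
    Compatible w fun i => toLex (g i, f ((u⁻¹ * w) i)) := by
  refine (compatible_toLex_iff fun i j => ?_).2 hg
  rw [← hf.lt_iff_lt]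
  simp

end Compatible

section Factorization

variable (α β : Type*) [LinearOrder α] [LinearOrder β]

def LabelledFactorization (w : Equiv.Perm (Fin n)) : Type _ :=
  {t : Equiv.Perm (Fin n) × (Fin n → α) × (Fin n → β) //
    Compatible t.1 t.2.1 ∧ Compatible (t.1⁻¹ * w) t.2.2}

noncomputable def labelledFactorizationEquiv (w : Equiv.Perm (Fin n)) :
    LabelledFactorization α β w ≃ {h : Fin n → β ×ₗ α // Compatible w h} where
  toFun t := ⟨_, t.2.1.toLex_comp t.2.2⟩
  invFun h :=
    let F i := (ofLex (h.1 i)).2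
    let σ := Tuple.sort fun i => toLex (F i, w i)
    have hσ : StrictMono ((fun i => toLex (F i, w i)) ∘ σ) :=
      Tuple.strictMono_comp_sort fun _ _ hij =>
        w.injective (Prod.ext_iff.1 (toLex.injective hij)).2
    ⟨(w * σ, F ∘ σ, fun i => (ofLex (h.1 i)).1), hσ, by
      rw [show (w * σ)⁻¹ * w = σ⁻¹ by group]
      exact (compatible_toLex_iff (lt_iff_lt_of_strictMono_comp hσ)).1 h.2⟩
  left_inv := by
    rintro ⟨⟨u, f, g⟩, hf, hg⟩
    have hσ : (u⁻¹ * w)⁻¹ = Tuple.sort fun i => toLex (f ((u⁻¹ * w) i), w i) := by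
      have hk : (fun i => toLex (f ((u⁻¹ * w) i), w i)) ∘ ⇑(u⁻¹ * w)⁻¹ =
          fun j => toLex (f j, u j) := by
        funext j
        simp
      exact Tuple.eq_sort_of_strictMono_comp (hk ▸ hf)
    refine Subtype.ext ?_
    dsimp only [LabelledFactorization, Equiv.coe_fn_mk]
    simp only [ofLex_toLex]
    rw [← hσ]
    simp [Function.comp_def]
  right_inv h := by
    ext i : 2
    simp

lemma card_labelledFactorization [Fintype α] [Fintype β] (w : Equiv.Perm (Fin n)) :
    Nat.card (LabelledFactorization α β w) = ∑ u : Equiv.Perm (Fin n),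
      (Fintype.card α + numAscents u).choose n *
        (Fintype.card β + numAscents (u⁻¹ * w)).choose n := by
  let e : LabelledFactorization α β w ≃ Σ u : Equiv.Perm (Fin n),
      {f : Fin n → α // Compatible u f} × {g : Fin n → β // Compatible (u⁻¹ * w) g} :=
    { toFun t := ⟨t.1.1, ⟨t.1.2.1, t.2.1⟩, ⟨t.1.2.2, t.2.2⟩⟩
      invFun s := ⟨(s.1, s.2.1.1, s.2.2.1), s.2.1.2, s.2.2.2⟩ }
  simp only [Nat.card_congr e, Nat.card_sigma, Nat.card_prod, card_compatible]

end Factorization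

theorem sum_choose_mul_choose (w : Equiv.Perm (Fin n)) (a b : ℕ) :
    ∑ u : Equiv.Perm (Fin n),
      (a + numAscents u).choose n * (b + numAscents (u⁻¹ * w)).choose n =
      (a * b + numAscents w).choose n := by
  have := Nat.card_congr (labelledFactorizationEquiv (Fin a) (Fin b) w)
  rw [card_labelledFactorization, card_compatible] at this
  simpa [mul_comm] using this

section Polynomial

open Polynomial

noncomputable def shiftedBinomPoly (n d : ℕ) : ℝ[X] :=
  C (n.factorial : ℝ)⁻¹ * (descPochhammer ℝ n).comp (X + C ((n : ℝ) - 1 - d))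

lemma eval_shiftedBinomPoly (n d : ℕ) (t : ℝ) :
    (shiftedBinomPoly n d).eval t = genBinom (t + n - 1 - d) n := by
  rw [genBinom_eq_eval_descPochhammer, shiftedBinomPoly, eval_mul, eval_C, eval_comp, eval_add,
    eval_X, eval_C, inv_mul_eq_div]
  ring_nf

theorem sum_genBinom_mul_genBinom (hn : 1 ≤ n) (w : Equiv.Perm (Fin n)) (x y : ℝ) :
    ∑ u : Equiv.Perm (Fin n),
      genBinom (x + n - 1 - numDescents u) n * genBinom (y + n - 1 - numDescents (u⁻¹ * w)) n =
      genBinom (x * y + n - 1 - numDescents w) n := by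
  refine eq_of_forall_natCast_eq₂
    (F := fun x y => ∑ u : Equiv.Perm (Fin n),
      genBinom (x + n - 1 - numDescents u) n * genBinom (y + n - 1 - numDescents (u⁻¹ * w)) n)
    (G := fun x y => genBinom (x * y + n - 1 - numDescents w) n) ?_ ?_ ?_ ?_ (fun a b => ?_) x y
  · exact fun y => ⟨∑ u, C (genBinom (y + n - 1 - numDescents (u⁻¹ * w)) n) *
      shiftedBinomPoly n (numDescents u),
      fun x => by simp [eval_finsetSum, eval_shiftedBinomPoly, mul_comm]⟩
  · exact fun y => ⟨(shiftedBinomPoly n (numDescents w)).comp (C y * X),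
      fun x => by simp [eval_shiftedBinomPoly, mul_comm y x]⟩
  · exact fun x => ⟨∑ u, C (genBinom (x + n - 1 - numDescents u) n) *
      shiftedBinomPoly n (numDescents (u⁻¹ * w)),
      fun y => by simp [eval_finsetSum, eval_shiftedBinomPoly]⟩
  · exact fun x => ⟨(shiftedBinomPoly n (numDescents w)).comp (C x * X),
      fun y => by simp [eval_shiftedBinomPoly]⟩
  · simp only [← Nat.cast_mul, genBinom_natCast_add_sub hn]
    exact_mod_cast sum_choose_mul_choose w a b

end Polynomial

end RiffleShuffle

theorem riffle_measure_convolution_symmetric_group_general (n : ℕ) (hn : 1 ≤ n)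
    (x y : ℝ) (w : Equiv.Perm (Fin n)) :
    ∑ p ∈ Finset.univ.filter
        (fun p : Equiv.Perm (Fin n) × Equiv.Perm (Fin n) => p.1 * p.2 = w),
      (genBinom (x + n - 1 - numDescents p.1) n / x ^ n) *
        (genBinom (y + n - 1 - numDescents p.2) n / y ^ n) =
      genBinom (x * y + n - 1 - numDescents w) n / (x * y) ^ n := by
  rw [sum_filter_mul_eq, mul_pow, ← RiffleShuffle.sum_genBinom_mul_genBinom hn w x y, sum_div]
  simp only [div_mul_div_comm]

/-- The convolution property `M_{W,x} M_{W,y} = M_{W,xy}` of the type `A`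
riffle shuffle measures `M_{Sₙ,x}(w) = C(x + n - 1 - d(w), n) / xⁿ`. -/
theorem riffle_measure_convolution_symmetric_group (n : ℕ) (hn : 1 ≤ n)
    (x y : ℝ) (hx : x ≠ 0) (hy : y ≠ 0) (w : Equiv.Perm (Fin n)) :
    ∑ p ∈ Finset.univ.filter
        (fun p : Equiv.Perm (Fin n) × Equiv.Perm (Fin n) => p.1 * p.2 = w),
      (genBinom (x + n - 1 - numDescents p.1) n / x ^ n) *
        (genBinom (y + n - 1 - numDescents p.2) n / y ^ n) =
      genBinom (x * y + n - 1 - numDescents w) n / (x * y) ^ n :=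
  riffle_measure_convolution_symmetric_group_general n hn x y w
end

section
/- Let (W,S) be a Coxeter system of type G_2 (two generators s, t with (st) of order 6), so W is the dihedral group of order 12. For a nonzero real number x define f_x : W → ℝ by f_x(w) = (x+5)(x+1)/(12x²) if d(w) = 0, f_x(w) = (x+1)(x−1)/(12x²) if d(w) = 1, and f_x(w) = (x−1)(x−5)/(12x²) if d(w) = 2. Then for all nonzero real numbers x and y and every w ∈ W, ∑_{(u,v) ∈ W × W, uv = w} f_x(u) f_y(v) = f_{xy}(w). -/
/-- The number of (right) descents of an element `w` of a Coxeter group: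
the number of simple reflections `s` with `ℓ(w s) < ℓ(w)`. -/
noncomputable def coxNumDescents {B W : Type*} [Group W] [Fintype B]
    {M : CoxeterMatrix B} (cs : CoxeterSystem M W) (w : W) : ℕ :=
  (Finset.univ.filter fun i : B => cs.length (w * cs.simple i) < cs.length w).card

/-- The shuffle measure `M_{G₂,x}` on a Coxeter group of type `G₂`:
`f_x(w) = (x+5)(x+1)/(12x²)`, `(x+1)(x-1)/(12x²)`, `(x-1)(x-5)/(12x²)`
according as `d(w) = 0, 1, 2`. -/
noncomputable def fG2 {W : Type*} [Group W]
    (cs : CoxeterSystem CoxeterMatrix.G₂ W) (x : ℝ) (w : W) : ℝ :=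
  if coxNumDescents cs w = 0 then (x + 5) * (x + 1) / (12 * x ^ 2)
  else if coxNumDescents cs w = 1 then (x + 1) * (x - 1) / (12 * x ^ 2)
  else (x - 1) * (x - 5) / (12 * x ^ 2)

/-!
Every element of `W` other than `1` and the longest element `w₀` has exactly one right descent,
so `f_x = c(x) + a(x) δ₁ + b(x) δ_{w₀}` with `c(x) = (x² - 1)/(12x²)`, `a(x) = (x + 1)/(2x²)`
and `b(x) = (1 - x)/(2x²)`. As `w₀² = 1`, functions of this shape on a finite group are closed
under convolution, the coefficients combining by an explicit bilinear rule; for a group of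
order `12` this rule sends the coefficients of `x` and `y` to those of `xy`.

The structure of `W` comes from its isomorphism with the dihedral group of order `12`, sending
the simple reflections to reflections: every element is an alternating product of length at
most `6`, and these products are told apart by their images.
-/

section Convolution

open Finset

variable {G R : Type*} [Group G] [DecidableEq G] [CommSemiring R]

def constAddDiracs (z : G) (c a b : R) (w : G) : R :=
  c + (if w = 1 then a else 0) + (if w = z then b else 0)

variable (z : G) (c a b : R)

theorem constAddDiracs_mul_left (hz : z * z = 1) (w : G) :
    constAddDiracs z c a b (z * w) = constAddDiracs z c b a w := by
  have hw1 : z * w = 1 ↔ w = z := by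
    rw [mul_eq_one_iff_inv_eq, inv_eq_of_mul_eq_one_left hz, eq_comm]
  have hwz : z * w = z ↔ w = 1 := mul_eq_left
  simp only [constAddDiracs, hw1, hwz]
  ring

variable [Fintype G]

def mulConv (f g : G → R) (w : G) : R :=
  ∑ p ∈ univ.filter (fun p : G × G => p.1 * p.2 = w), f p.1 * g p.2

theorem mulConv_apply (f g : G → R) (w : G) : mulConv f g w = ∑ u, f u * g (u⁻¹ * w) := by
  simp only [mulConv, sum_filter, Fintype.sum_prod_type, ← eq_inv_mul_iff_mul_eq,
    sum_ite_eq', mem_univ, if_true]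

theorem sum_constAddDiracs : ∑ w, constAddDiracs z c a b w = Fintype.card G * c + a + b := by
  simp [constAddDiracs, sum_add_distrib]

theorem sum_constAddDiracs_mul (f : G → R) (w : G) :
    ∑ u, constAddDiracs z c a b u * f (u⁻¹ * w) =
      c * ∑ v, f v + a * f w + b * f (z⁻¹ * w) := by
  have hshift : ∑ u, f (u⁻¹ * w) = ∑ v, f v :=
    Fintype.sum_equiv ((Equiv.inv G).trans (Equiv.mulRight w)) _ _ fun _ => rfl
  simp [constAddDiracs, add_mul, sum_add_distrib, ← mul_sum, hshift]

theorem mulConv_constAddDiracs (hz : z * z = 1) (c' a' b' : R) :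
    mulConv (constAddDiracs z c a b) (constAddDiracs z c' a' b') =
      constAddDiracs z (Fintype.card G * c * c' + c * (a' + b') + c' * (a + b))
        (a * a' + b * b') (a * b' + b * a') := by
  ext w
  rw [mulConv_apply, sum_constAddDiracs_mul, sum_constAddDiracs, inv_eq_of_mul_eq_one_left hz,
    constAddDiracs_mul_left z c' a' b' hz]
  simp only [constAddDiracs]
  split_ifs <;> ring

end Convolution

namespace CoxeterSystem.G₂

open DihedralGroup

theorem fin_two_add_one_add_one (i : Fin 2) : i + 1 + 1 = i := by
  fin_cases i <;> rfl

theorem fin_two_eq_or_eq_add_one (i j : Fin 2) : j = i ∨ j = i + 1 := by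
  fin_cases i <;> fin_cases j <;> simp

def dihedralSimple : Fin 2 → DihedralGroup 6 := ![sr 0, sr 1]

theorem isLiftable_dihedralSimple : CoxeterMatrix.G₂.IsLiftable dihedralSimple := by
  intro i j
  fin_cases i <;> fin_cases j <;> decide

def dihedralAltProd (i : Fin 2) (k : ℕ) : DihedralGroup 6 :=
  ((alternatingWord (i + 1) i k).map dihedralSimple).prod

set_option synthInstance.maxSize 1000 in
theorem dihedralAltProd_eq_iff :
    ∀ i j : Fin 2, ∀ k < 7, ∀ k' < 7, dihedralAltProd i k = dihedralAltProd j k' ↔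
      k = k' ∧ (i = j ∨ k = 0 ∨ k = 6) := by
  decide

theorem exists_dihedralAltProd_eq :
    ∀ g : DihedralGroup 6, ∃ i : Fin 2, ∃ k < 7, dihedralAltProd i k = g := by
  decide

variable {W : Type*} [Group W] (cs : CoxeterSystem CoxeterMatrix.G₂ W)

def toDihedral : W →* DihedralGroup 6 := cs.lift ⟨dihedralSimple, isLiftable_dihedralSimple⟩

theorem toDihedral_wordProd (ω : List (Fin 2)) :
    toDihedral cs (cs.wordProd ω) = (ω.map dihedralSimple).prod := by
  rw [wordProd, map_list_prod, List.map_map]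
  congr 2
  funext i
  exact cs.lift_apply_simple isLiftable_dihedralSimple i

/-- The product of the alternating word of length `k` ending in `sᵢ`. -/
def altProd (i : Fin 2) (k : ℕ) : W := cs.wordProd (alternatingWord (i + 1) i k)

theorem toDihedral_altProd (i : Fin 2) (k : ℕ) :
    toDihedral cs (altProd cs i k) = dihedralAltProd i k :=
  toDihedral_wordProd cs _

theorem altProd_zero (i : Fin 2) : altProd cs i 0 = 1 := cs.wordProd_nil

theorem altProd_succ (i : Fin 2) (k : ℕ) :
    altProd cs i (k + 1) = altProd cs (i + 1) k * cs.simple i := by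
  rw [altProd, altProd, alternatingWord_succ, wordProd_concat, fin_two_add_one_add_one]

theorem altProd_succ_mul_simple (i : Fin 2) (k : ℕ) :
    altProd cs i (k + 1) * cs.simple i = altProd cs (i + 1) k := by
  rw [altProd_succ, simple_mul_simple_cancel_right]

theorem altProd_mul_simple_add_one (i : Fin 2) (k : ℕ) :
    altProd cs i k * cs.simple (i + 1) = altProd cs (i + 1) (k + 1) := by
  rw [altProd_succ, fin_two_add_one_add_one]

theorem altProd_six (i j : Fin 2) : altProd cs i 6 = altProd cs j 6 := by
  fin_cases i <;> fin_cases j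
  exacts [rfl, cs.wordProd_braidWord_eq 1 0, cs.wordProd_braidWord_eq 0 1, rfl]

theorem exists_altProd_mul_simple_eq {i : Fin 2} {k : ℕ} (hk : k ≤ 6) (j : Fin 2) :
    ∃ i' k', k' ≤ k + 1 ∧ k' ≤ 6 ∧ altProd cs i k * cs.simple j = altProd cs i' k' := by
  obtain rfl | rfl := fin_two_eq_or_eq_add_one i j
  · cases k with
    | zero => exact ⟨j, 1, by omega, by omega, by rw [altProd_succ, altProd_zero, altProd_zero]⟩
    | succ k => exact ⟨j + 1, k, by omega, by omega, altProd_succ_mul_simple cs j k⟩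
  · obtain hk | rfl := hk.lt_or_eq
    · exact ⟨i + 1, k + 1, le_rfl, hk, altProd_mul_simple_add_one cs i k⟩
    · refine ⟨i, 5, by omega, by omega, ?_⟩
      rw [altProd_six cs i (i + 1), altProd_succ_mul_simple, fin_two_add_one_add_one]

theorem exists_altProd_eq_wordProd (ω : List (Fin 2)) :
    ∃ i k, k ≤ ω.length ∧ k ≤ 6 ∧ cs.wordProd ω = altProd cs i k := by
  induction ω using List.reverseRecOn with
  | nil => exact ⟨0, 0, le_rfl, by omega, (altProd_zero cs 0).symm⟩
  | append_singleton ω j ih =>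
    obtain ⟨i, k, hkω, hk, hω⟩ := ih
    obtain ⟨i', k', hk'k, hk', h⟩ := exists_altProd_mul_simple_eq cs hk j
    refine ⟨i', k', ?_, hk', ?_⟩
    · rw [List.length_append, List.length_singleton]
      omega
    · rw [wordProd_append, wordProd_singleton, hω, h]

theorem exists_eq_altProd (w : W) : ∃ i k, k ≤ 6 ∧ w = altProd cs i k := by
  obtain ⟨ω, rfl⟩ := cs.wordProd_surjective w
  obtain ⟨i, k, -, hk, h⟩ := exists_altProd_eq_wordProd cs ω
  exact ⟨i, k, hk, h⟩

theorem toDihedral_injective : Function.Injective (toDihedral cs) := by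
  intro u v huv
  obtain ⟨i, k, hk, rfl⟩ := exists_eq_altProd cs u
  obtain ⟨j, k', hk', rfl⟩ := exists_eq_altProd cs v
  rw [toDihedral_altProd, toDihedral_altProd] at huv
  obtain ⟨rfl, rfl | rfl | rfl⟩ := (dihedralAltProd_eq_iff i j k (by omega) k' (by omega)).1 huv
  · rfl
  · rw [altProd_zero, altProd_zero]
  · exact altProd_six cs i j

theorem toDihedral_surjective : Function.Surjective (toDihedral cs) := by
  intro g
  obtain ⟨i, k, -, rfl⟩ := exists_dihedralAltProd_eq g
  exact ⟨altProd cs i k, toDihedral_altProd cs i k⟩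

theorem card_eq_twelve [Fintype W] (cs : CoxeterSystem CoxeterMatrix.G₂ W) :
    Fintype.card W = 12 := by
  rw [Fintype.card_of_bijective ⟨toDihedral_injective cs, toDihedral_surjective cs⟩,
    DihedralGroup.card]

theorem length_altProd (i : Fin 2) {k : ℕ} (hk : k ≤ 6) : cs.length (altProd cs i k) = k := by
  refine le_antisymm ((cs.length_wordProd_le _).trans (length_alternatingWord _ _ _).le) ?_
  obtain ⟨ω, hω, hw⟩ := cs.exists_isReduced (altProd cs i k)
  obtain ⟨j, k', hk'ω, hk', h⟩ := exists_altProd_eq_wordProd cs ω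
  have hkk' : k = k' := by
    refine ((dihedralAltProd_eq_iff i j k (by omega) k' (by omega)).1 ?_).1
    rw [← toDihedral_altProd cs, hw, h, toDihedral_altProd]
  rw [hw, hω, hkk']
  exact hk'ω

def longest : W := altProd cs 0 6

theorem longest_mul_self : longest cs * longest cs = 1 :=
  toDihedral_injective cs (by rw [map_mul, map_one, longest, toDihedral_altProd]; decide)

theorem length_longest : cs.length (longest cs) = 6 := length_altProd cs 0 le_rfl

theorem longest_ne_one : longest cs ≠ 1 := by
  rw [Ne, ← cs.length_eq_zero_iff, length_longest]
  omega

theorem coxNumDescents_longest : coxNumDescents cs (longest cs) = 2 := by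
  have hdesc (j : Fin 2) : cs.length (longest cs * cs.simple j) < cs.length (longest cs) := by
    rw [longest, altProd_six cs 0 j, altProd_succ_mul_simple, length_altProd cs _ (by omega),
      length_altProd cs _ le_rfl]
    omega
  simp [coxNumDescents, hdesc]

theorem coxNumDescents_altProd (i : Fin 2) {k : ℕ} (hk0 : 0 < k) (hk : k < 6) :
    coxNumDescents cs (altProd cs i k) = 1 := by
  have hdesc (j : Fin 2) :
      cs.length (altProd cs i k * cs.simple j) < cs.length (altProd cs i k) ↔ j = i := by
    obtain ⟨k, rfl⟩ := Nat.exists_eq_add_one_of_ne_zero hk0.ne'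
    obtain rfl | rfl := fin_two_eq_or_eq_add_one i j
    · rw [altProd_succ_mul_simple, length_altProd cs _ (by omega), length_altProd cs _ (by omega)]
      simp
    · rw [altProd_mul_simple_add_one, length_altProd cs _ (by omega),
        length_altProd cs _ (by omega)]
      fin_cases i <;> simp
  simp [coxNumDescents, hdesc, Finset.filter_eq']

theorem coxNumDescents_eq_ite [DecidableEq W] (w : W) :
    coxNumDescents cs w = if w = 1 then 0 else if w = longest cs then 2 else 1 := by
  obtain ⟨i, k, hk, rfl⟩ := exists_eq_altProd cs w
  obtain rfl | hk0 := Nat.eq_zero_or_pos k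
  · simp [coxNumDescents, altProd_zero]
  obtain hk6 | rfl := hk.lt_or_eq
  · have hlen := length_altProd cs i hk
    have hne : altProd cs i k ≠ 1 := by
      rw [Ne, ← cs.length_eq_zero_iff, hlen]
      omega
    have hnl : altProd cs i k ≠ longest cs := by
      intro h
      rw [h, length_longest] at hlen
      omega
    rw [coxNumDescents_altProd cs i hk0 hk6, if_neg hne, if_neg hnl]
  · rw [altProd_six cs i 0, ← longest, coxNumDescents_longest, if_neg (longest_ne_one cs),
      if_pos rfl]

noncomputable def constCoeff (x : ℝ) : ℝ := (x + 1) * (x - 1) / (12 * x ^ 2)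

noncomputable def oneCoeff (x : ℝ) : ℝ := (x + 1) / (2 * x ^ 2)

noncomputable def longestCoeff (x : ℝ) : ℝ := (1 - x) / (2 * x ^ 2)

theorem fG2_eq_constAddDiracs [DecidableEq W] (x : ℝ) :
    fG2 cs x = constAddDiracs (longest cs) (constCoeff x) (oneCoeff x) (longestCoeff x) := by
  funext w
  rw [fG2, coxNumDescents_eq_ite, constAddDiracs, constCoeff, oneCoeff, longestCoeff]
  by_cases h1 : w = 1
  · simp only [h1, (longest_ne_one cs).symm, ↓reduceIte, add_zero]
    ring
  by_cases hw : w = longest cs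
  · simp only [hw, longest_ne_one cs, ↓reduceIte, OfNat.ofNat_ne_zero, OfNat.ofNat_ne_one]
    ring
  · simp only [h1, hw, ↓reduceIte, one_ne_zero, add_zero]

theorem coeffs_mul (x y : ℝ) :
    12 * constCoeff x * constCoeff y + constCoeff x * (oneCoeff y + longestCoeff y) +
        constCoeff y * (oneCoeff x + longestCoeff x) = constCoeff (x * y) ∧
      oneCoeff x * oneCoeff y + longestCoeff x * longestCoeff y = oneCoeff (x * y) ∧
      oneCoeff x * longestCoeff y + longestCoeff x * oneCoeff y = longestCoeff (x * y) := by
  unfold constCoeff oneCoeff longestCoeff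
  obtain rfl | hx := eq_or_ne x 0
  · simp
  obtain rfl | hy := eq_or_ne y 0
  · simp
  refine ⟨?_, ?_, ?_⟩ <;> field_simp <;> ring

end CoxeterSystem.G₂

theorem shuffle_measure_convolution_G2_general {W : Type*} [Group W] [Fintype W]
    [DecidableEq W] (cs : CoxeterSystem CoxeterMatrix.G₂ W)
    (x y : ℝ) (w : W) :
    ∑ p ∈ Finset.univ.filter (fun p : W × W => p.1 * p.2 = w),
      fG2 cs x p.1 * fG2 cs y p.2 = fG2 cs (x * y) w := by
  obtain ⟨hconst, hone, hlongest⟩ := CoxeterSystem.G₂.coeffs_mul x y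
  change mulConv (fG2 cs x) (fG2 cs y) w = fG2 cs (x * y) w
  open CoxeterSystem.G₂ in
  rw [fG2_eq_constAddDiracs, fG2_eq_constAddDiracs, fG2_eq_constAddDiracs,
    mulConv_constAddDiracs _ _ _ _ (longest_mul_self cs), card_eq_twelve cs, Nat.cast_ofNat,
    hconst, hone, hlongest]

/-- The convolution property `M_{G₂,x} M_{G₂,y} = M_{G₂,xy}` of the shuffle
measures on a Coxeter group of type `G₂`. -/
theorem shuffle_measure_convolution_G2 {W : Type*} [Group W] [Fintype W]
    [DecidableEq W] (cs : CoxeterSystem CoxeterMatrix.G₂ W)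
    (x y : ℝ) (hx : x ≠ 0) (hy : y ≠ 0) (w : W) :
    ∑ p ∈ Finset.univ.filter (fun p : W × W => p.1 * p.2 = w),
      fG2 cs x p.1 * fG2 cs y p.2 = fG2 cs (x * y) w :=
  shuffle_measure_convolution_G2_general cs x y w
end

section
/- Let (W,S) be a Coxeter system with S finite and W finite. For each subset K ⊆ S let W_K denote the standard parabolic subgroup of W generated by K. Then ∑_{K ⊆ S} (−1)^{|K|} [W : W_K] = 1, where [W : W_K] denotes the index of W_K in W and the sum is over all subsets K of S. -/
/-!
Every left coset of `W_K` contains exactly one element with no right descent in `K` (its element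
of minimal length), so `[W : W_K]` counts the `w` whose set `A(w)` of right ascents contains `K`.
Exchanging the two sums, `∑_K (-1)^|K| [W : W_K] = ∑_w ∑_{K ⊆ A(w)} (-1)^|K|` counts the `w`
with no right ascent at all. The longest element `w₀` is the only one, since
`ℓ (w₀ v) = ℓ w₀ - ℓ v`: every reflection is a left inversion of `w₀`.

Both facts rest on the strong exchange condition. It comes from the semidirect product
`(W → ℤˣ) ⋊ W`: the elements `(sign flip at s, s)` satisfy the Coxeter relations, and the
lift of `s ↦ (sign flip at s, s)` to `W` attaches to `w` the sign function `t ↦ (-1) ^ m`,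
where `m` is the multiplicity of `t` in the left inversion sequence of any word for `w`. So this
parity depends only on `w`, and it is odd exactly for the left inversions of `w`.
-/

noncomputable section

open List
open scoped Classical Finset

theorem Function.Periodic.even_count_map_range_two_mul {α : Type*} {f : ℕ → α} {m : ℕ}
    (hf : Function.Periodic f m) (x : α) :
    Even (((List.range (2 * m)).map f).count x) := by
  have hshift : f ∘ (m + ·) = f := funext fun n => by simpa [add_comm] using hf n
  rw [two_mul, List.range_add, List.map_append, List.map_map, hshift, List.count_append]
  exact ⟨_, rfl⟩

variable {W : Type*} [Group W]

lemma List.count_map_conj (g t : W) (L : List W) :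
    (L.map (MulAut.conj g)).count t = L.count (g⁻¹ * t * g) := by
  conv_lhs => rw [show t = MulAut.conj g (g⁻¹ * t * g) by simp [mul_assoc]]
  exact List.count_map_of_injective _ _ (MulAut.conj g).injective _

def mulAutArrowConj (W M : Type*) [Group W] [Monoid M] : W →* MulAut (W → M) :=
  mulAutArrow.comp (ConjAct.toConjAct : W ≃* ConjAct W).toMonoidHom

@[simp]
lemma mulAutArrowConj_apply_apply {M : Type*} [Monoid M] (w : W) (f : W → M) (x : W) :
    mulAutArrowConj W M w f x = f (w⁻¹ * x * w) := by
  change f ((ConjAct.toConjAct w)⁻¹ • x) = _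
  simp [ConjAct.smul_def]

variable (W) in
abbrev SignTwist := (W → ℤˣ) ⋊[mulAutArrowConj W ℤˣ] W

def signedReflection (t : W) : SignTwist W := ⟨Pi.mulSingle t (-1), t⟩

namespace CoxeterSystem

variable {B : Type*} {M : CoxeterMatrix B} (cs : CoxeterSystem M W)

local prefix:100 "s" => cs.simple
local prefix:100 "π" => cs.wordProd
local prefix:100 "ℓ" => cs.length
local prefix:100 "lis" => cs.leftInvSeq

lemma leftInvSeq_cons (i : B) (ω : List B) :
    lis (i :: ω) = s i :: (lis ω).map (MulAut.conj (s i)) := rfl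

lemma prod_map_signedReflection (ω : List B) :
    (ω.map (signedReflection ∘ cs.simple)).prod =
      ⟨fun t => (-1) ^ (lis ω).count t, π ω⟩ := by
  induction ω with
  | nil => rfl
  | cons i ω ih =>
    rw [List.map_cons, List.prod_cons, ih]
    refine SemidirectProduct.ext (funext fun t => ?_) (by simp [signedReflection, wordProd_cons])
    simp only [SemidirectProduct.mul_left, Pi.mul_apply, mulAutArrowConj_apply_apply,
      leftInvSeq_cons, List.count_cons, pow_add, count_map_conj, Function.comp_apply,
      signedReflection, mul_comm (Pi.mulSingle _ _ t)]
    congr 1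
    rcases eq_or_ne t (s i) with rfl | h
    · simp
    · simp [h, h.symm]

lemma leftInvSeq_flatten_replicate (i i' : B) (m : ℕ) :
    lis (List.replicate m [i, i']).flatten =
      (List.range (2 * m)).map (fun n => (s i * s i') ^ n * s i) := by
  induction m with
  | zero => rfl
  | succ m ih =>
    rw [List.replicate_succ, List.flatten_cons, List.cons_append, List.cons_append, List.nil_append,
      leftInvSeq_cons, leftInvSeq_cons, ih, show 2 * (m + 1) = 2 + 2 * m by ring, List.range_add]
    simp only [show List.range 2 = [0, 1] from rfl, List.map_cons, List.map_map,
      List.cons_append, List.nil_append]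
    refine congrArg₂ _ (by simp) (congrArg₂ _ (by simp [inv_simple])
      (List.map_congr_left fun n _ => ?_))
    simp only [Function.comp_apply]
    rw [show 2 + n = 1 + n + 1 by ring, pow_succ, pow_add, pow_one]
    simp [inv_simple, mul_assoc]

-- The left inversion sequence `(s i * s i') ^ n * s i`, `n < 2 * M i i'`, is periodic with
-- period `M i i'`, so each element occurs in it an even number of times.
lemma isLiftable_signedReflection : M.IsLiftable (signedReflection ∘ cs.simple) := by
  intro i i'
  have hword : (signedReflection (s i) * signedReflection (s i')) ^ M i i' =
      ((List.replicate (M i i') [i, i']).flatten.map (signedReflection ∘ cs.simple)).prod := by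
    simp [List.map_flatten, List.prod_flatten, List.prod_replicate]
  rw [Function.comp_apply, Function.comp_apply, hword, prod_map_signedReflection,
    leftInvSeq_flatten_replicate]
  ext t
  · have hperiodic : Function.Periodic (fun n => (s i * s i') ^ n * s i) (M i i') := fun n => by
      simp [pow_add, cs.simple_mul_simple_pow]
    simp [(hperiodic.even_count_map_range_two_mul t).neg_one_pow]
  · simp [wordProd, List.map_flatten, List.prod_flatten, List.prod_replicate,
      cs.simple_mul_simple_pow]

def signLift : W →* SignTwist W := cs.lift ⟨_, cs.isLiftable_signedReflection⟩

lemma signLift_wordProd (ω : List B) :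
    cs.signLift (π ω) = ⟨fun t => (-1) ^ (lis ω).count t, π ω⟩ := by
  rw [← cs.prod_map_signedReflection, wordProd, map_list_prod, List.map_map]
  exact congrArg _ (List.map_congr_left fun i _ => cs.lift_apply_simple _ i)

lemma signLift_right (w : W) : (cs.signLift w).right = w := by
  obtain ⟨ω, rfl⟩ := cs.wordProd_surjective w
  rw [signLift_wordProd]

def inversionSign (w t : W) : ℤˣ := (cs.signLift w).left t

lemma inversionSign_wordProd (ω : List B) (t : W) :
    cs.inversionSign (π ω) t = (-1) ^ (lis ω).count t := by
  rw [inversionSign, signLift_wordProd]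

lemma inversionSign_mul (u v t : W) :
    cs.inversionSign (u * v) t = cs.inversionSign u t * cs.inversionSign v (u⁻¹ * t * u) := by
  simp [inversionSign, signLift_right]

lemma inversionSign_mul_inversionSign_inv (w t : W) :
    cs.inversionSign w t * cs.inversionSign w⁻¹ (w⁻¹ * t * w) = 1 := by
  rw [← inversionSign_mul, mul_inv_cancel]
  simp [inversionSign]

lemma inversionSign_self_of_isReflection {t : W} (ht : cs.IsReflection t) :
    cs.inversionSign t t = -1 := by
  obtain ⟨w, i, rfl⟩ := ht
  have hconj : w⁻¹ * (w * s i * w⁻¹) * w = s i := by group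
  have hsimple : cs.inversionSign (s i) (s i) = -1 := by
    rw [← wordProd_singleton, inversionSign_wordProd]; simp
  have hinv := cs.inversionSign_mul_inversionSign_inv w (w * s i * w⁻¹)
  rw [hconj] at hinv
  calc cs.inversionSign (w * s i * w⁻¹) (w * s i * w⁻¹)
      = cs.inversionSign w (w * s i * w⁻¹) *
          (cs.inversionSign (s i) (s i) * cs.inversionSign w⁻¹ (s i)) := by
        rw [mul_assoc w, inversionSign_mul, ← mul_assoc w, hconj, inversionSign_mul, inv_simple,
          simple_mul_simple_cancel_right]
    _ = -1 := by rw [hsimple, mul_left_comm, hinv, mul_one]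

lemma mem_leftInvSeq_of_inversionSign_eq_neg_one {ω : List B} {t : W}
    (h : cs.inversionSign (π ω) t = -1) : t ∈ lis ω := by
  rw [inversionSign_wordProd] at h
  exact List.count_pos_iff.mp (Nat.pos_of_ne_zero fun h0 => by simp [h0] at h)

lemma isLeftInversion_iff_inversionSign {w t : W} :
    cs.IsLeftInversion w t ↔ cs.inversionSign w t = -1 := by
  have of_sign : ∀ {w}, cs.inversionSign w t = -1 → cs.IsLeftInversion w t := fun {w} h => by
    obtain ⟨ω, hω, rfl⟩ := cs.exists_isReduced w
    exact cs.isLeftInversion_of_mem_leftInvSeq hω (cs.mem_leftInvSeq_of_inversionSign_eq_neg_one h)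
  refine ⟨fun h => (Int.units_eq_one_or _).resolve_left fun h1 => ?_, of_sign⟩
  -- Otherwise `t` would also be a left inversion of `t * w`, i.e. `ℓ w < ℓ (t * w)`.
  have hsign : cs.inversionSign (t * w) t = -1 := by
    rw [inversionSign_mul, inversionSign_self_of_isReflection cs h.1, inv_mul_cancel, one_mul, h1,
      mul_one]
  have hlt := (of_sign hsign).2
  rw [← mul_assoc, h.1.mul_self, one_mul] at hlt
  exact absurd h.2 (not_lt.mpr hlt.le)

lemma isLeftInversion_mul_iff {u v t : W} :
    cs.IsLeftInversion (u * v) t ↔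
      (cs.IsLeftInversion u t ↔ ¬cs.IsLeftInversion v (u⁻¹ * t * u)) := by
  simp only [isLeftInversion_iff_inversionSign, inversionSign_mul]
  rcases Int.units_eq_one_or (cs.inversionSign u t) with h | h <;>
    rcases Int.units_eq_one_or (cs.inversionSign v (u⁻¹ * t * u)) with h' | h' <;>
    simp [h, h']

lemma mem_leftInvSeq_of_isLeftInversion {ω : List B} {t : W} (h : cs.IsLeftInversion (π ω) t) :
    t ∈ lis ω :=
  cs.mem_leftInvSeq_of_inversionSign_eq_neg_one (cs.isLeftInversion_iff_inversionSign.mp h)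

lemma exists_eraseIdx_of_isLeftInversion {ω : List B} {t : W} (h : cs.IsLeftInversion (π ω) t) :
    ∃ j < ω.length, t * π ω = π (ω.eraseIdx j) := by
  obtain ⟨j, hj, rfl⟩ := List.mem_iff_getElem.mp (cs.mem_leftInvSeq_of_isLeftInversion h)
  refine ⟨j, by simpa using hj, ?_⟩
  rw [← List.getD_eq_getElem _ 1 hj, getD_leftInvSeq_mul_wordProd]

lemma exists_reduced_sublist (ω : List B) :
    ∃ ρ, ρ <+ ω ∧ cs.IsReduced ρ ∧ π ρ = π ω := by
  induction ω with
  | nil => exact ⟨[], .slnil, by simp [IsReduced], rfl⟩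
  | cons i ω ih =>
    obtain ⟨ρ, hsub, hred, hprod⟩ := ih
    rw [wordProd_cons, ← hprod]
    rcases cs.length_simple_mul (π ρ) i with hlen | hlen
    · refine ⟨i :: ρ, hsub.cons_cons i, ?_, wordProd_cons _ _ _⟩
      rw [IsReduced, wordProd_cons, hlen, hred, List.length_cons]
    · have hinv : cs.IsLeftInversion (π ρ) (s i) := ⟨cs.isReflection_simple i, by omega⟩
      obtain ⟨j, hj, hprod'⟩ := cs.exists_eraseIdx_of_isLeftInversion hinv
      refine ⟨ρ.eraseIdx j, (List.eraseIdx_sublist ρ j).trans (hsub.cons i), ?_, hprod'.symm⟩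
      have := List.length_eraseIdx_add_one hj
      rw [IsReduced, ← hprod']
      rw [IsReduced] at hred
      omega

lemma leftInversions_eq_toFinset {ω : List B} (hω : cs.IsReduced ω) :
    {t | cs.IsLeftInversion (π ω) t} = ((lis ω).toFinset : Set W) := by
  ext t
  simpa using ⟨cs.mem_leftInvSeq_of_isLeftInversion, cs.isLeftInversion_of_mem_leftInvSeq hω⟩

lemma finite_leftInversions (w : W) : {t | cs.IsLeftInversion w t}.Finite := by
  obtain ⟨ω, hω, rfl⟩ := cs.exists_isReduced w
  rw [cs.leftInversions_eq_toFinset hω]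
  exact Finset.finite_toSet _

lemma length_eq_ncard_leftInversions (w : W) : ℓ w = {t | cs.IsLeftInversion w t}.ncard := by
  obtain ⟨ω, hω, rfl⟩ := cs.exists_isReduced w
  rw [cs.leftInversions_eq_toFinset hω, Set.ncard_coe_finset,
    List.toFinset_card_of_nodup hω.nodup_leftInvSeq, length_leftInvSeq, hω]

abbrev parabolicSubgroup (K : Set B) : Subgroup W := Subgroup.closure (cs.simple '' K)

lemma mem_parabolicSubgroup_iff {K : Set B} {w : W} :
    w ∈ cs.parabolicSubgroup K ↔ ∃ ω : List B, (∀ i ∈ ω, i ∈ K) ∧ π ω = w := by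
  refine ⟨fun hw => ?_, ?_⟩
  · induction hw using Subgroup.closure_induction with
    | mem _ hx =>
      obtain ⟨i, hi, rfl⟩ := hx
      exact ⟨[i], by simpa using hi, wordProd_singleton _ _⟩
    | one => exact ⟨[], by simp, wordProd_nil _⟩
    | mul _ _ _ _ ha hb =>
      obtain ⟨α, hα, rfl⟩ := ha
      obtain ⟨β, hβ, rfl⟩ := hb
      refine ⟨α ++ β, ?_, wordProd_append _ _ _⟩
      simpa [or_imp, forall_and] using ⟨hα, hβ⟩
    | inv _ _ ha =>
      obtain ⟨α, hα, rfl⟩ := ha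
      exact ⟨α.reverse, by simpa using hα, wordProd_reverse _ _⟩
  · rintro ⟨ω, hω, rfl⟩
    refine list_prod_mem fun x hx => ?_
    obtain ⟨i, hi, rfl⟩ := List.mem_map.mp hx
    exact Subgroup.subset_closure ⟨i, hω i hi, rfl⟩

lemma exists_reduced_of_mem_parabolicSubgroup {K : Set B} {w : W}
    (hw : w ∈ cs.parabolicSubgroup K) :
    ∃ ω : List B, (∀ i ∈ ω, i ∈ K) ∧ cs.IsReduced ω ∧ π ω = w := by
  obtain ⟨ω, hω, rfl⟩ := cs.mem_parabolicSubgroup_iff.mp hw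
  obtain ⟨ρ, hsub, hred, hprod⟩ := cs.exists_reduced_sublist ω
  exact ⟨ρ, fun i hi => hω i (hsub.subset hi), hred, hprod⟩

lemma exists_isRightDescent_of_mem_parabolicSubgroup {K : Set B} {v : W}
    (hv : v ∈ cs.parabolicSubgroup K) (hv1 : v ≠ 1) : ∃ i ∈ K, cs.IsRightDescent v i := by
  obtain ⟨ω, hK, hred, rfl⟩ := cs.exists_reduced_of_mem_parabolicSubgroup hv
  obtain ⟨ρ, i, rfl⟩ := (List.eq_nil_or_concat ω).resolve_left (by rintro rfl; simp at hv1)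
  refine ⟨i, hK i (by simp), ?_⟩
  rw [IsReduced, wordProd_concat] at hred
  rw [IsRightDescent, wordProd_concat, simple_mul_simple_cancel_right, hred]
  exact (cs.length_wordProd_le ρ).trans_lt (by simp)

def IsMinimalCosetRep (P : Subgroup W) (u : W) : Prop := ∀ p ∈ P, ℓ u ≤ ℓ (u * p)

lemma exists_isMinimalCosetRep (P : Subgroup W) (w : W) :
    ∃ u, w⁻¹ * u ∈ P ∧ cs.IsMinimalCosetRep P u := by
  obtain ⟨p, hp, hmin⟩ :=
    (InvImage.wf (fun p => ℓ (w * p)) wellFounded_lt).has_min (P : Set W) ⟨1, P.one_mem⟩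
  refine ⟨w * p, by simpa using hp, fun q hq => ?_⟩
  simpa only [InvImage, not_lt, ← mul_assoc] using hmin (p * q) (P.mul_mem hp hq)

namespace IsMinimalCosetRep

variable {cs}

lemma not_isRightDescent {P : Subgroup W} {u : W} (hu : cs.IsMinimalCosetRep P u) {i : B}
    (hi : s i ∈ P) : ¬cs.IsRightDescent u i :=
  not_lt.mpr (hu _ hi)

lemma length_mul {K : Set B} {u v : W} (hu : cs.IsMinimalCosetRep (cs.parabolicSubgroup K) u)
    (hv : v ∈ cs.parabolicSubgroup K) : ℓ (u * v) = ℓ u + ℓ v := by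
  obtain ⟨α, hα, rfl⟩ := cs.exists_isReduced u
  obtain ⟨τ, hτ, rfl⟩ := cs.mem_parabolicSubgroup_iff.mp hv
  obtain ⟨γ, hsub, hγ, hprod⟩ := cs.exists_reduced_sublist (α ++ τ)
  obtain ⟨γ₁, γ₂, rfl, h₁, h₂⟩ := List.sublist_append_iff.mp hsub
  have hγ₂ : π γ₂ ∈ cs.parabolicSubgroup K :=
    cs.mem_parabolicSubgroup_iff.mpr ⟨γ₂, fun i hi => hτ i (h₂.subset hi), rfl⟩
  have hcoset : π α * (π τ * (π γ₂)⁻¹) = π γ₁ := by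
    rw [← mul_assoc, ← wordProd_append, ← hprod, wordProd_append, mul_inv_cancel_right]
  have hmin := hu _ (Subgroup.mul_mem _ hv (Subgroup.inv_mem _ hγ₂))
  rw [hcoset] at hmin
  -- `π γ₁` lies in the coset `u W_K`, so the subword `γ₁` of the reduced word `α` is `α`.
  obtain rfl : α = γ₁ := (h₁.eq_of_length
    (h₁.length_le.antisymm (hα ▸ hmin.trans (cs.length_wordProd_le γ₁)))).symm
  rw [wordProd_append, wordProd_append] at hprod
  have hlen := cs.length_wordProd_le γ₂
  rw [IsReduced, wordProd_append, hprod, List.length_append] at hγ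
  rw [IsReduced] at hα
  rw [mul_left_cancel hprod] at hlen
  have := cs.length_mul_le (π α) (π τ)
  omega

lemma eq_of_not_isRightDescent {K : Set B} {u u' : W}
    (hu : cs.IsMinimalCosetRep (cs.parabolicSubgroup K) u)
    (hmem : u⁻¹ * u' ∈ cs.parabolicSubgroup K) (hu' : ∀ i ∈ K, ¬cs.IsRightDescent u' i) :
    u' = u := by
  by_contra hne
  obtain ⟨i, hi, hdesc⟩ := cs.exists_isRightDescent_of_mem_parabolicSubgroup hmem
    (by rwa [Ne, inv_mul_eq_one, eq_comm])
  have hsi : s i ∈ cs.parabolicSubgroup K := Subgroup.subset_closure ⟨i, hi, rfl⟩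
  have h1 := hu.length_mul hmem
  have h2 := hu.length_mul (Subgroup.mul_mem _ hmem hsi)
  rw [mul_inv_cancel_left] at h1
  rw [← mul_assoc, mul_inv_cancel_left] at h2
  exact hu' i hi (by unfold IsRightDescent at hdesc ⊢; omega)

end IsMinimalCosetRep

lemma index_parabolicSubgroup (K : Set B) :
    (cs.parabolicSubgroup K).index = Nat.card {u : W // ∀ i ∈ K, ¬cs.IsRightDescent u i} := by
  set P := cs.parabolicSubgroup K
  refine (Nat.card_congr (Equiv.ofBijective (fun u => (u.1 : W ⧸ P)) ⟨?_, ?_⟩)).symm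
  · rintro ⟨u₁, h₁⟩ ⟨u₂, h₂⟩ h
    obtain ⟨u, hu₁, hu⟩ := cs.exists_isMinimalCosetRep P u₁
    have hu₁' : u⁻¹ * u₁ ∈ P := by simpa using P.inv_mem hu₁
    have e₁ := hu.eq_of_not_isRightDescent hu₁' h₁
    have e₂ := hu.eq_of_not_isRightDescent
      (by simpa [mul_assoc] using P.mul_mem hu₁' (QuotientGroup.eq.mp h)) h₂
    exact Subtype.ext (e₁.trans e₂.symm)
  · intro q
    obtain ⟨w, rfl⟩ := QuotientGroup.mk_surjective q
    obtain ⟨u, hwu, hu⟩ := cs.exists_isMinimalCosetRep P w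
    exact ⟨⟨u, fun i hi => hu.not_isRightDescent (Subgroup.subset_closure ⟨i, hi, rfl⟩)⟩,
      QuotientGroup.eq.mpr (by simpa using P.inv_mem hwu)⟩

section Longest

variable {w₀ : W}

lemma isLeftInversion_of_forall_length_le (hmax : ∀ w, ℓ w ≤ ℓ w₀) {t : W}
    (ht : cs.IsReflection t) : cs.IsLeftInversion w₀ t :=
  ⟨ht, lt_of_le_of_ne (hmax _) (ht.length_mul_right_ne w₀)⟩

lemma isRightDescent_of_forall_length_le (hmax : ∀ w, ℓ w ≤ ℓ w₀) (i : B) :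
    cs.IsRightDescent w₀ i :=
  lt_of_le_of_ne (hmax _) (cs.length_mul_simple_ne w₀ i)

lemma length_mul_add_length_of_forall_length_le (hmax : ∀ w, ℓ w ≤ ℓ w₀) (v : W) :
    ℓ (w₀ * v) + ℓ v = ℓ w₀ := by
  have hT : {t | cs.IsLeftInversion w₀ t} = {t | cs.IsReflection t} :=
    Set.ext fun t => ⟨And.left, cs.isLeftInversion_of_forall_length_le hmax⟩
  have hconj (t : W) : t ∈ MulAut.conj w₀ '' {t | cs.IsLeftInversion v t} ↔
      cs.IsLeftInversion v (w₀⁻¹ * t * w₀) := by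
    refine ⟨fun ⟨x, hx, e⟩ => ?_, fun h => ⟨_, h, by simp [mul_assoc]⟩⟩
    subst e
    simpa [mul_assoc] using hx
  have hdiff : {t | cs.IsLeftInversion (w₀ * v) t} =
      {t | cs.IsReflection t} \ MulAut.conj w₀ '' {t | cs.IsLeftInversion v t} := by
    ext t
    rw [Set.mem_ofPred_eq, isLeftInversion_mul_iff, Set.mem_sdiff, hconj, Set.mem_ofPred_eq]
    by_cases ht : cs.IsReflection t
    · simp [cs.isLeftInversion_of_forall_length_le hmax ht, ht]
    · have hv : ¬cs.IsLeftInversion v (w₀⁻¹ * t * w₀) := fun h =>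
        ht (by simpa [mul_assoc] using h.1.conj w₀)
      have hw₀ : ¬cs.IsLeftInversion w₀ t := fun h => ht h.1
      simp [ht, hv, hw₀]
  have hsub : MulAut.conj w₀ '' {t | cs.IsLeftInversion v t} ⊆ {t | cs.IsReflection t} := by
    rintro _ ⟨t, ht, rfl⟩
    exact ht.1.conj w₀
  rw [cs.length_eq_ncard_leftInversions (w₀ * v), hdiff, cs.length_eq_ncard_leftInversions v,
    cs.length_eq_ncard_leftInversions w₀, hT,
    ← Set.ncard_image_of_injective {t | cs.IsLeftInversion v t} (MulAut.conj w₀).injective]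
  exact Set.ncard_sdiff_add_ncard_of_subset hsub (hT ▸ cs.finite_leftInversions w₀)

lemma eq_of_forall_isRightDescent (hmax : ∀ w, ℓ w ≤ ℓ w₀) {w : W}
    (hw : ∀ i, cs.IsRightDescent w i) : w = w₀ := by
  obtain ⟨v, rfl⟩ : ∃ v, w = w₀ * v := ⟨w₀⁻¹ * w, by group⟩
  rcases eq_or_ne v 1 with rfl | hv
  · exact mul_one w₀
  obtain ⟨i, hi⟩ := cs.exists_rightDescent_of_ne_one hv
  have h₁ := cs.length_mul_add_length_of_forall_length_le hmax v
  have h₂ := cs.length_mul_add_length_of_forall_length_le hmax (v * s i)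
  have h₃ := hw i
  rw [IsRightDescent, mul_assoc] at h₃
  rw [IsRightDescent] at hi
  omega

end Longest

end CoxeterSystem

theorem Finset.sum_neg_one_pow_card_mul_card_filter_subset {α ι : Type*} [Fintype α] [Fintype ι]
    (A : α → Finset ι) :
    ∑ K : Finset ι, (-1 : ℤ) ^ #K * #{a | K ⊆ A a} = #{a | A a = ∅} := by
  simp_rw [Finset.card_filter, Nat.cast_sum, Finset.mul_sum, Nat.cast_ite, Nat.cast_one,
    Nat.cast_zero, mul_ite, mul_one, mul_zero]
  rw [Finset.sum_comm]
  refine Finset.sum_congr rfl fun a _ => ?_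
  rw [← Finset.sum_filter, ← Finset.sum_powerset_neg_one_pow_card]
  congr 1
  ext K
  simp

end

/-- The alternating sum formula for a finite Coxeter system `(W, S)`:
`∑_{K ⊆ S} (-1)^{|K|} [W : W_K] = 1`, where `W_K` is the standard parabolic
subgroup generated by `K`. -/
theorem alternating_sum_index_parabolic {B W : Type*} [Fintype B] [Group W]
    [Fintype W] (M : CoxeterMatrix B) (cs : CoxeterSystem M W) :
    ∑ K : Finset B,
      (-1 : ℤ) ^ K.card * (Subgroup.closure (cs.simple '' ↑K)).index = 1 := by
  classical
  obtain ⟨w₀, hmax⟩ := Finite.exists_max cs.length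
  let ascents (w : W) : Finset B := {i | ¬cs.IsRightDescent w i}
  have hindex (K : Finset B) :
      (Subgroup.closure (cs.simple '' ↑K)).index =
        (Finset.univ.filter (K ⊆ ascents ·)).card := by
    rw [cs.index_parabolicSubgroup, Nat.card_eq_fintype_card, Fintype.card_subtype]
    simp [ascents, Finset.subset_iff]
  have hlongest : Finset.univ.filter (ascents · = ∅) = {w₀} := by
    ext w
    simp only [ascents, Finset.mem_filter, Finset.mem_univ, true_and, Finset.mem_singleton,
      Finset.filter_eq_empty_iff, not_not, forall_const]
    exact ⟨cs.eq_of_forall_isRightDescent hmax,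
      by rintro rfl; exact cs.isRightDescent_of_forall_length_le hmax⟩
  simp_rw [hindex]
  rw [Finset.sum_neg_one_pow_card_mul_card_filter_subset, hlongest, Finset.card_singleton,
    Nat.cast_one]
end
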